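/- Let V be a finite-dimensional complex inner product space, Σ a real-linear subspace, and g : V → V a complex-linear unitary map with g(Σ) = Σ such that the restriction of g to Σ is an involution whose fixed-point set Y = {v ∈ Σ : g v = v} has real codimension one in Σ. Then the maximal complex subspace H = Σ ∩ i·Σ of Σ is contained in Y. -/
import Mathlib


open scoped InnerProductSpace

/-- Multiplication by `i` as an `ℝ`-linear map on a complex vector space. -/
def Jmap (V : Type*) [NormedAddCommGroup V] [InnerProductSpace ℂ V] : V →ₗ[ℝ] V where
  toFun v := Complex.I • v
  map_add' := fun u v => smul_add Complex.I u v
  map_smul' := fun r v => (smul_comm Complex.I r v)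

theorem maximal_complex_subspace_le_reflection_hyperplane
    (V : Type*) [NormedAddCommGroup V] [InnerProductSpace ℂ V]
    [FiniteDimensional ℂ V]
    (S : Submodule ℝ V) (g : V →ₗ[ℂ] V)
    (hunit : ∀ u v : V, ⟪g u, g v⟫_ℂ = ⟪u, v⟫_ℂ)
    (hpres : S.map (g.restrictScalars ℝ) = S)
    (hinv : ∀ v ∈ S, g (g v) = v)
    (Y : Submodule ℝ V)
    (hY : Y = S ⊓ Submodule.restrictScalars ℝ (LinearMap.ker (g - LinearMap.id)))
    (hcodim : Module.finrank ℝ Y + 1 = Module.finrank ℝ S) :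
    S ⊓ S.map (Jmap V) ≤ Y := by
  haveI : FiniteDimensional ℝ V := Module.Finite.trans ℂ V
  -- the (-1)-eigenspace part of S
  set N : Submodule ℝ V :=
    S ⊓ Submodule.restrictScalars ℝ (LinearMap.ker (g + LinearMap.id)) with hN
  have hNmem : ∀ x, x ∈ N ↔ x ∈ S ∧ g x = -x := by
    intro x
    simp only [hN, Submodule.mem_inf, Submodule.restrictScalars_mem, LinearMap.mem_ker,
      LinearMap.add_apply, LinearMap.id_apply, add_eq_zero_iff_eq_neg]
  have hYmem : ∀ x, x ∈ Y ↔ x ∈ S ∧ g x = x := by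
    intro x
    simp only [hY, Submodule.mem_inf, Submodule.restrictScalars_mem, LinearMap.mem_ker,
      LinearMap.sub_apply, LinearMap.id_apply, sub_eq_zero]
  -- Y and N are disjoint
  have hdisj : Y ⊓ N = ⊥ := by
    apply (Submodule.eq_bot_iff _).mpr
    intro x hx
    obtain ⟨hx1, hx2⟩ := hx
    have h1 := (hYmem x).mp hx1
    have h2 := (hNmem x).mp hx2
    have hx : x = -x := by conv_lhs => rw [← h1.2, h2.2]
    have h3 : (2 : ℝ) • x = 0 := by
      rw [two_smul]; nth_rewrite 2 [hx]; exact add_neg_cancel x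
    simpa using smul_eq_zero.mp h3
  -- N has rank at most 1
  have hNrank : Module.finrank ℝ N ≤ 1 := by
    have hsup : Y ⊔ N ≤ S := by
      apply sup_le
      · rw [hY]; exact inf_le_left
      · exact inf_le_left
    have heq := Submodule.finrank_sup_add_finrank_inf_eq Y N
    rw [hdisj, finrank_bot] at heq
    have hle : Module.finrank ℝ ↥(Y ⊔ N) ≤ Module.finrank ℝ S :=
      Submodule.finrank_mono hsup
    omega
  -- main argument
  intro v hv
  obtain ⟨hvS, hvJ⟩ := hv
  obtain ⟨u, huS, huv⟩ := hvJ
  have huv' : Complex.I • u = v := huv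
  have hIv : Complex.I • v ∈ S := by
    have : Complex.I • v = -u := by
      rw [← huv', smul_smul, Complex.I_mul_I, neg_one_smul]
    rw [this]; exact S.neg_mem huS
  have hgv : g v ∈ S := by
    rw [← hpres]; exact ⟨v, hvS, rfl⟩
  set w := v - g v with hw
  have hwS : w ∈ S := S.sub_mem hvS hgv
  have hgw : g w = -w := by
    simp only [hw, map_sub, hinv v hvS, neg_sub]
  have hIwS : Complex.I • w ∈ S := by
    have h1 : g (Complex.I • v) ∈ S := by
      rw [← hpres]; exact ⟨_, hIv, rfl⟩
    have h2 : Complex.I • w = Complex.I • v - g (Complex.I • v) := by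
      rw [map_smul, hw, smul_sub]
    rw [h2]; exact S.sub_mem hIv h1
  have hwN : w ∈ N := (hNmem w).mpr ⟨hwS, hgw⟩
  have hIwN : Complex.I • w ∈ N := by
    refine (hNmem _).mpr ⟨hIwS, ?_⟩
    rw [map_smul, hgw, smul_neg]
  -- w must be zero
  have hw0 : w = 0 := by
    by_contra hne
    -- build a linearly independent pair in N
    have hind : LinearIndependent ℝ
        (![(⟨w, hwN⟩ : N), ⟨Complex.I • w, hIwN⟩] : Fin 2 → N) := by
      rw [LinearIndependent.pair_iff]
      intro s t hst
      have hst' : s • w + t • (Complex.I • w) = 0 := by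
        have := congrArg (Submodule.subtype N) hst
        simpa using this
      have hc : ((s : ℂ) + (t : ℂ) * Complex.I) • w = 0 := by
        rw [add_smul, mul_smul]
        rw [Complex.coe_smul, Complex.coe_smul]
        exact hst'
      have hc0 : ((s : ℂ) + (t : ℂ) * Complex.I) = 0 :=
        (smul_eq_zero.mp hc).resolve_right hne
      constructor
      · have := congrArg Complex.re hc0
        simpa using this
      · have := congrArg Complex.im hc0
        simpa using this
    have := hind.fintype_card_le_finrank
    simp only [Fintype.card_fin] at this
    omega
  refine (hYmem v).mpr ⟨hvS, ?_⟩
  have : v - g v = 0 := hw0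
  exact (sub_eq_zero.mp this).symm
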